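/- arXiv:1203.6560 — 5 statements merged into one kernel-verified Lean document; each statement's English description precedes it below -/
import Mathlib

section
/- Let S be a finite type, and consider a reaction network given by a finite set R of reactions r with reactant complex y(r) and product complex y'(r) in ℝ≥0^S, with stoichiometric subspace 𝒮 = span{y'(r) − y(r) : r ∈ R}. Suppose the network is NOT weakly normal, i.e. for every choice of vectors p_r ∈ ℝ≥0^S with supp(p_r) = supp(y(r)), the linear map T̄ : 𝒮 → 𝒮, T̄σ = ∑_r (p_r · σ)(y'(r) − y(r)), is singular. Then the network is discordant: there exist α : R → ℝ and a nonzero σ ∈ 𝒮 with ∑_r α(r)(y'(r)−y(r)) = 0 such that (i) for each r with α(r) ≠ 0, supp(y(r)) contains a species s with sgn(σ_s) = sgn(α(r)), and (ii) for each r with α(r) = 0, either σ_s = 0 for all s ∈ supp(y(r)) or supp(y(r)) contains species s, s' with sgn(σ_s) = −sgn(σ_{s'}) ≠ 0. -/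
private lemma mul_pos_facts {a b : ℝ} (ha : 0 ≤ a) (h : 0 < a * b) :
    a ≠ 0 ∧ 0 < b := by
  constructor
  · rintro rfl; simp at h
  · by_contra hb
    push_neg at hb
    nlinarith

private lemma mul_neg_facts {a b : ℝ} (ha : 0 ≤ a) (h : a * b < 0) :
    a ≠ 0 ∧ b < 0 := by
  constructor
  · rintro rfl; simp at h
  · by_contra hb
    push_neg at hb
    nlinarith

/-- Proposition 8.8: a reaction network that is not weakly normal is
discordant. -/
theorem not_weakly_normal_implies_discordant
    {S R : Type} [Fintype S] [Fintype R]
    (y y' : R → S → ℝ)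
    (hy : ∀ r s, 0 ≤ y r s) (hy' : ∀ r s, 0 ≤ y' r s)
    (𝒮 : Submodule ℝ (S → ℝ))
    (h𝒮 : 𝒮 = Submodule.span ℝ (Set.range fun r => y' r - y r))
    -- the network is NOT weakly normal: every admissible choice of the
    -- vectors p_r makes the map T̄ singular on 𝒮
    (hnwn : ∀ p : R → S → ℝ,
      (∀ r s, 0 ≤ p r s) →
      (∀ r s, p r s ≠ 0 ↔ y r s ≠ 0) →
      ∃ σ ∈ 𝒮, σ ≠ 0 ∧ ∑ r, (∑ s, p r s * σ s) • (y' r - y r) = 0) :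
    -- the network is discordant
    ∃ (α : R → ℝ) (σ : S → ℝ), σ ∈ 𝒮 ∧ σ ≠ 0 ∧
      (∑ r, α r • (y' r - y r) = 0) ∧
      (∀ r, α r ≠ 0 →
        ∃ s, y r s ≠ 0 ∧ Real.sign (σ s) = Real.sign (α r)) ∧
      (∀ r, α r = 0 →
        (∀ s, y r s ≠ 0 → σ s = 0) ∨
        (∃ s s', y r s ≠ 0 ∧ y r s' ≠ 0 ∧ σ s ≠ 0 ∧ σ s' ≠ 0 ∧
          Real.sign (σ s) = - Real.sign (σ s'))) := by
  obtain ⟨σ, hσ𝒮, hσne, hsum⟩ := hnwn y hy (fun r s => Iff.rfl)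
  refine ⟨fun r => ∑ s, y r s * σ s, σ, hσ𝒮, hσne, hsum, ?_, ?_⟩
  · intro r hα
    rcases hα.lt_or_gt with h | h
    · have : ∑ s, y r s * σ s < ∑ s : S, (0 : ℝ) := by simpa using h
      obtain ⟨s, -, hs⟩ := Finset.exists_lt_of_sum_lt this
      obtain ⟨hy0, hσ0⟩ := mul_neg_facts (hy r s) hs
      exact ⟨s, hy0, by rw [Real.sign_of_neg hσ0, Real.sign_of_neg h]⟩
    · have : ∑ s : S, (0 : ℝ) < ∑ s, y r s * σ s := by simpa using h
      obtain ⟨s, -, hs⟩ := Finset.exists_lt_of_sum_lt this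
      obtain ⟨hy0, hσ0⟩ := mul_pos_facts (hy r s) hs
      exact ⟨s, hy0, by rw [Real.sign_of_pos hσ0, Real.sign_of_pos h]⟩
  · intro r hα
    by_cases hall : ∀ s, y r s ≠ 0 → σ s = 0
    · exact Or.inl hall
    · right
      push_neg at hall
      obtain ⟨s0, hys0, hσs0⟩ := hall
      have hterm : y r s0 * σ s0 ≠ 0 := mul_ne_zero hys0 hσs0
      have hα' : ∑ s, y r s * σ s = 0 := hα
      have hpos : ∃ s, 0 < y r s * σ s := by
        by_contra hp
        push_neg at hp
        have h1 : (0:ℝ) < ∑ s, -(y r s * σ s) := by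
          refine Finset.sum_pos' (fun s _ => by linarith [hp s]) ⟨s0, Finset.mem_univ s0, ?_⟩
          have := lt_of_le_of_ne (hp s0) hterm
          linarith
        rw [Finset.sum_neg_distrib] at h1
        linarith
      have hneg : ∃ s, y r s * σ s < 0 := by
        by_contra hp
        push_neg at hp
        have h1 : (0:ℝ) < ∑ s, y r s * σ s := by
          refine Finset.sum_pos' (fun s _ => hp s) ⟨s0, Finset.mem_univ s0, ?_⟩
          exact lt_of_le_of_ne (hp s0) (Ne.symm hterm)
        linarith
      obtain ⟨s, hs⟩ := hpos
      obtain ⟨s', hs'⟩ := hneg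
      obtain ⟨hy1, hσ1⟩ := mul_pos_facts (hy r s) hs
      obtain ⟨hy2, hσ2⟩ := mul_neg_facts (hy r s') hs'
      exact ⟨s, s', hy1, hy2, ne_of_gt hσ1, ne_of_lt hσ2, by
        rw [Real.sign_of_pos hσ1, Real.sign_of_neg hσ2]; norm_num⟩
end

section
/- Let S be a finite type and R a finite set of reactions with reactant complexes y(r) and product complexes y'(r) in ℝ≥0^S, with stoichiometric subspace 𝒮 of dimension d. If there exist d reactions r₁,…,r_d and vectors p₁,…,p_d ∈ ℝ≥0^S with supp(p_i) = supp(y(r_i)) such that det[p_i · (y'(r_j) − y(r_j))]_{i,j} ≠ 0, then the network is weakly normal: there exists a choice of p_r ∈ ℝ≥0^S with supp(p_r) = supp(y(r)) for all r ∈ R such that σ ↦ ∑_{r ∈ R} (p_r · σ)(y'(r) − y(r)) is nonsingular on 𝒮. -/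
/-!
Pairing the reaction vectors `y'(rⱼ) - y(rⱼ)` with the `pᵢ` gives the nonsingular matrix `M`,
so these `d` vectors are independent and form a basis of `𝒮`. Attaching each `pᵢ` to its
reaction `rᵢ` (summing over repeated reactions) yields coefficients `P` whose map, restricted to
`𝒮`, has matrix `M` in that basis. Since `supp P ⊆ supp y`, the coefficients `P + ε y` have exactly
the support of `y` for every `ε > 0`. Their map on `𝒮` is affine in `ε`, so its determinant is
continuous in `ε` and nonzero at `ε = 0`, hence nonzero for some `ε > 0`.
-/

open Matrix Module

section LinearAlgebra

variable {K V ι : Type*} [Field K] [AddCommGroup V] [Module K V] [Fintype ι] [DecidableEq ι]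

theorem linearIndependent_of_det_pairing_ne_zero (φ : ι → Dual K V) (v : ι → V)
    (h : (of fun i j => φ i (v j)).det ≠ 0) : LinearIndependent K v :=
  LinearIndependent.of_comp (LinearMap.pi φ)
    (linearIndependent_cols_of_isUnit ((isUnit_iff_isUnit_det _).mpr h.isUnit))

theorem LinearMap.injective_of_det_ne_zero [FiniteDimensional K V] {f : End K V}
    (h : LinearMap.det f ≠ 0) : Function.Injective f :=
  ((End.isUnit_iff f).mp ((LinearMap.isUnit_iff_isUnit_det f).mpr h.isUnit)).injective

end LinearAlgebra

theorem exists_pos_det_add_smul_ne_zero {E : Type*} [AddCommGroup E] [Module ℝ E]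
    [FiniteDimensional ℝ E] {f : End ℝ E} (hf : LinearMap.det f ≠ 0) (g : End ℝ E) :
    ∃ ε : ℝ, 0 < ε ∧ LinearMap.det (f + ε • g) ≠ 0 := by
  let b := finBasis ℝ E
  have hcont : Continuous fun ε : ℝ => LinearMap.det (f + ε • g) := by
    simp_rw [← LinearMap.det_toMatrix b, map_add, map_smul]
    fun_prop
  exact (hcont.continuousAt.eventually_ne
    (by simpa using hf : LinearMap.det (f + (0 : ℝ) • g) ≠ 0)).exists_gt

section ReactionNetwork

variable {S R : Type} [Fintype S] [Fintype R] (y y' : R → S → ℝ) {𝒮 : Submodule ℝ (S → ℝ)}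
  (h𝒮 : ∀ r, y' r - y r ∈ 𝒮)

noncomputable def reactionEndo (q : R → S → ℝ) : End ℝ 𝒮 :=
  ∑ r, ((dotProductBilin ℝ ℝ (q r)).comp 𝒮.subtype).smulRight ⟨y' r - y r, h𝒮 r⟩

@[simp]
lemma coe_reactionEndo_apply (q : R → S → ℝ) (σ : 𝒮) :
    (reactionEndo y y' h𝒮 q σ : S → ℝ) = ∑ r, (q r ⬝ᵥ σ) • (y' r - y r) := by
  simp [reactionEndo]

lemma reactionEndo_add_smul (q q' : R → S → ℝ) (c : ℝ) :
    reactionEndo y y' h𝒮 (q + c • q') =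
      reactionEndo y y' h𝒮 q + c • reactionEndo y y' h𝒮 q' := by
  ext σ
  simp [add_dotProduct, add_smul, Finset.sum_add_distrib, Finset.smul_sum, smul_smul]

lemma coe_reactionEndo_fiberwise_apply [DecidableEq R] {ι : Type*} [Fintype ι] (r : ι → R)
    (p : ι → S → ℝ) (σ : 𝒮) :
    (reactionEndo y y' h𝒮 (fun r' => ∑ i with r i = r', p i) σ : S → ℝ) =
      ∑ i, (p i ⬝ᵥ σ) • (y' (r i) - y (r i)) := by
  simp only [coe_reactionEndo_apply, sum_dotProduct, Finset.sum_smul]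
  rw [← Finset.sum_fiberwise Finset.univ r]
  refine Finset.sum_congr rfl fun r' _ => Finset.sum_congr rfl fun i hi => ?_
  rw [(Finset.mem_filter.mp hi).2]

end ReactionNetwork

section Support

variable {S R ι : Type*} [Fintype ι] [DecidableEq R] (y : R → S → ℝ) (r : ι → R)
  (p : ι → S → ℝ)

lemma sum_fiber_apply_nonneg (hp : ∀ i s, 0 ≤ p i s) (r' : R) (s : S) :
    0 ≤ (∑ i with r i = r', p i) s := by
  rw [Finset.sum_apply]
  exact Finset.sum_nonneg fun i _ => hp i s

lemma sum_fiber_apply_eq_zero (hsupp : ∀ i s, p i s ≠ 0 → y (r i) s ≠ 0) {r' : R} {s : S}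
    (hy : y r' s = 0) : (∑ i with r i = r', p i) s = 0 := by
  rw [Finset.sum_apply]
  refine Finset.sum_eq_zero fun i hi => ?_
  by_contra h
  exact hsupp i s h ((Finset.mem_filter.mp hi).2 ▸ hy)

lemma sum_fiber_add_smul_apply_ne_zero_iff (hy : ∀ r s, 0 ≤ y r s) (hp : ∀ i s, 0 ≤ p i s)
    (hsupp : ∀ i s, p i s ≠ 0 → y (r i) s ≠ 0) {ε : ℝ} (hε : 0 < ε) (r' : R) (s : S) :
    ((fun r' => ∑ i with r i = r', p i) + ε • y) r' s ≠ 0 ↔ y r' s ≠ 0 := by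
  simp only [Pi.add_apply, Pi.smul_apply, smul_eq_mul]
  constructor
  · intro h hy0
    exact h (by rw [sum_fiber_apply_eq_zero y r p hsupp hy0, hy0, mul_zero, add_zero])
  · intro h
    have hεy : 0 < ε * y r' s := mul_pos hε ((hy r' s).lt_of_ne' h)
    linarith [sum_fiber_apply_nonneg r p hp r' s]

end Support

theorem det_test_implies_weakly_normal_general
    {S R : Type} [Fintype S] [Fintype R]
    (y y' : R → S → ℝ)
    (hy : ∀ r s, 0 ≤ y r s)
    (𝒮 : Submodule ℝ (S → ℝ))
    (h𝒮 : 𝒮 = Submodule.span ℝ (Set.range fun r => y' r - y r))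
    (d : ℕ) (hd : Module.finrank ℝ 𝒮 = d)
    (r : Fin d → R) (p : Fin d → S → ℝ)
    (hp : ∀ i s, 0 ≤ p i s)
    (hsupp : ∀ i s, p i s ≠ 0 ↔ y (r i) s ≠ 0)
    (hdet : (Matrix.of fun i j : Fin d =>
      ∑ s, p i s * (y' (r j) s - y (r j) s)).det ≠ 0) :
    ∃ q : R → S → ℝ,
      (∀ r' s, 0 ≤ q r' s) ∧
      (∀ r' s, q r' s ≠ 0 ↔ y r' s ≠ 0) ∧
      (∀ σ ∈ 𝒮, ∑ r', (∑ s, q r' s * σ s) • (y' r' - y r') = 0 → σ = 0) := by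
  classical
  have hv : ∀ r', y' r' - y r' ∈ 𝒮 := fun r' => h𝒮 ▸ Submodule.subset_span ⟨r', rfl⟩
  let P : R → S → ℝ := fun r' => ∑ i with r i = r', p i
  have hli : LinearIndependent ℝ fun j => (⟨y' (r j) - y (r j), hv (r j)⟩ : 𝒮) :=
    linearIndependent_of_det_pairing_ne_zero
      (fun i => (dotProductBilin ℝ ℝ (p i)).comp 𝒮.subtype) _ hdet
  let b := basisOfLinearIndependentOfCardEqFinrank' _ hli (by simp [hd])
  have hb : ∀ j, b j = ⟨y' (r j) - y (r j), hv (r j)⟩ := fun j => by simp [b]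
  have hP : reactionEndo y y' hv P =
      toLin b b (of fun i j => ∑ s, p i s * (y' (r j) s - y (r j) s)) :=
    b.ext fun j => Subtype.ext <| by
      rw [toLin_self, hb]
      refine (coe_reactionEndo_fiberwise_apply y y' hv r p _).trans ?_
      simp [hb, dotProduct]
  obtain ⟨ε, hε, hdetε⟩ := exists_pos_det_add_smul_ne_zero (f := reactionEndo y y' hv P)
    (by rwa [hP, LinearMap.det_toLin]) (reactionEndo y y' hv y)
  refine ⟨P + ε • y, fun r' s => ?_,
    sum_fiber_add_smul_apply_ne_zero_iff y r p hy hp (fun i s => (hsupp i s).mp) hε,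
    fun σ hσ h0 => ?_⟩
  · exact add_nonneg (sum_fiber_apply_nonneg r p hp r' s) (mul_nonneg hε.le (hy r' s))
  · have hσ0 : reactionEndo y y' hv (P + ε • y) ⟨σ, hσ⟩ = 0 :=
      Subtype.ext ((coe_reactionEndo_apply y y' hv _ _).trans h0)
    rw [reactionEndo_add_smul] at hσ0
    simpa using LinearMap.injective_of_det_ne_zero hdetε (hσ0.trans (map_zero _).symm)

/-- Proposition 8.5: the determinant test implies weak normality. -/
theorem det_test_implies_weakly_normal
    {S R : Type} [Fintype S] [Fintype R]
    (y y' : R → S → ℝ)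
    (hy : ∀ r s, 0 ≤ y r s) (hy' : ∀ r s, 0 ≤ y' r s)
    (𝒮 : Submodule ℝ (S → ℝ))
    (h𝒮 : 𝒮 = Submodule.span ℝ (Set.range fun r => y' r - y r))
    (d : ℕ) (hd : Module.finrank ℝ 𝒮 = d)
    (r : Fin d → R) (p : Fin d → S → ℝ)
    (hp : ∀ i s, 0 ≤ p i s)
    (hsupp : ∀ i s, p i s ≠ 0 ↔ y (r i) s ≠ 0)
    (hdet : (Matrix.of fun i j : Fin d =>
      ∑ s, p i s * (y' (r j) s - y (r j) s)).det ≠ 0) :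
    ∃ q : R → S → ℝ,
      (∀ r' s, 0 ≤ q r' s) ∧
      (∀ r' s, q r' s ≠ 0 ↔ y r' s ≠ 0) ∧
      (∀ σ ∈ 𝒮, ∑ r', (∑ s, q r' s * σ s) • (y' r' - y r') = 0 → σ = 0) :=
  det_test_implies_weakly_normal_general y y' hy 𝒮 h𝒮 d hd r p hp hsupp hdet
end

section
/- Let V be a finite set and consider the incidence map T^T : ℝ^E → ℝ^V of a finite directed graph, T^T x = ∑_{e ∈ E} x_e·(ω_{head(e)} − ω_{tail(e)}). Then every nonzero x ∈ ker(T^T) with x ≥ 0 (componentwise) can be written as a finite positive linear combination of directed cycle vectors: x = ∑_{θ=1}^k α_θ·c_θ with α_θ > 0 and each c_θ the indicator vector of a directed cycle of the graph. -/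
/-- `c` is the indicator vector of a directed cycle of the graph given by
`head` and `tail`. -/
def IsDirectedCycleVector {V E : Type} (head tail : E → V) (c : E → ℝ) : Prop :=
  ∃ (n : ℕ), 0 < n ∧ ∃ ed : ZMod n → E,
    Function.Injective ed ∧
    (∀ i, head (ed i) = tail (ed (i + 1))) ∧
    c = Set.indicator (Set.range ed) 1

open Function in
/-- If every edge in a set `S` has a follow-up edge in `S`, then `S` contains a
directed cycle. -/
lemma exists_cycle_in {V E : Type} [Fintype E] (head tail : E → V)
    (S : Set E) (hS : S.Nonempty)
    (h : ∀ e ∈ S, ∃ e' ∈ S, tail e' = head e) :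
    ∃ n : ℕ, 0 < n ∧ ∃ ed : ZMod n → E, Function.Injective ed ∧
      (∀ i, head (ed i) = tail (ed (i + 1))) ∧ Set.range ed ⊆ S := by
  classical
  obtain ⟨e0, he0⟩ := hS
  choose f hfS hft using h
  set g : E → E := fun e => if he : e ∈ S then f e he else e with hgdef
  have hgS : ∀ e ∈ S, g e ∈ S := fun e he => by simp [hgdef, he, hfS e he]
  have hgt : ∀ e ∈ S, tail (g e) = head e := fun e he => by simp [hgdef, he, hft e he]
  have horb : ∀ k, g^[k] e0 ∈ S := by
    intro k
    induction k with
    | zero => simpa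
    | succ k ih => rw [Function.iterate_succ_apply']; exact hgS _ ih
  have hninj : ¬ Function.Injective (fun k : ℕ => g^[k] e0) := by
    intro hinj
    haveI : Finite ℕ := Finite.of_injective _ hinj
    exact not_finite ℕ
  rw [Function.not_injective_iff] at hninj
  obtain ⟨a, b, heq, hne⟩ := hninj
  wlog hlt : a < b generalizing a b
  · exact this b a heq.symm hne.symm (hne.lt_or_gt.resolve_left hlt)
  set p : E := g^[a] e0 with hp
  have hper : IsPeriodicPt g (b - a) p := by
    show g^[b-a] p = p
    rw [hp, ← Function.iterate_add_apply, Nat.sub_add_cancel hlt.le]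
    exact heq.symm
  set n : ℕ := minimalPeriod g p with hn
  have hnpos : 0 < n := hper.minimalPeriod_pos (Nat.sub_pos_of_lt hlt)
  haveI : NeZero n := ⟨hnpos.ne'⟩
  have horbp : ∀ k, g^[k] p ∈ S := by
    intro k
    rw [hp, ← Function.iterate_add_apply]
    exact horb _
  refine ⟨n, hnpos, fun i => g^[i.val] p, ?_, ?_, ?_⟩
  · intro i j hij
    have := iterate_injOn_Iio_minimalPeriod (f := g) (x := p)
      (Set.mem_Iio.mpr (ZMod.val_lt i)) (Set.mem_Iio.mpr (ZMod.val_lt j)) hij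
    exact ZMod.val_injective n this
  · intro i
    show head (g^[i.val] p) = tail (g^[(i + 1).val] p)
    have hval : (i + 1 : ZMod n).val = (i.val + 1) % n := by
      have : ((i.val + 1 : ℕ) : ZMod n) = i + 1 := by
        push_cast [ZMod.natCast_rightInverse i]; ring
      rw [← this, ZMod.val_natCast]
    rw [hval, iterate_mod_minimalPeriod_eq, Function.iterate_succ_apply']
    exact (hgt _ (horbp i.val)).symm
  · rintro e ⟨i, rfl⟩
    exact horbp i.val

/-- Per-vertex flow conservation of a directed cycle indicator vector. -/
lemma cycle_kernel {V E : Type} [Fintype E] [DecidableEq V] (head tail : E → V)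
    {n : ℕ} (hn : 0 < n) (ed : ZMod n → E) (hinj : Function.Injective ed)
    (hcyc : ∀ i, head (ed i) = tail (ed (i + 1))) (v : V) :
    ∑ e, (Set.indicator (Set.range ed) 1 e : ℝ) *
      ((if v = head e then (1:ℝ) else 0) - (if v = tail e then 1 else 0)) = 0 := by
  classical
  haveI : NeZero n := ⟨hn.ne'⟩
  set G : E → ℝ := fun e => (if v = head e then (1:ℝ) else 0) - (if v = tail e then 1 else 0)
    with hG
  have step1 : ∑ e, (Set.indicator (Set.range ed) 1 e : ℝ) * G e = ∑ i : ZMod n, G (ed i) := by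
    have h1 : ∀ e, (Set.indicator (Set.range ed) 1 e : ℝ) * G e
        = if e ∈ Set.range ed then G e else 0 := by
      intro e
      by_cases he : e ∈ Set.range ed <;> simp [he]
    rw [Finset.sum_congr rfl fun e _ => h1 e, ← Finset.sum_filter]
    have h2 : Finset.univ.filter (· ∈ Set.range ed) = Finset.image ed Finset.univ := by
      ext e; simp [Set.mem_range]
    rw [h2, Finset.sum_image fun i _ j _ h => hinj h]
  rw [step1, hG]
  simp only [Finset.sum_sub_distrib]
  have h3 : ∑ i : ZMod n, (if v = head (ed i) then (1:ℝ) else 0)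
      = ∑ i : ZMod n, (if v = tail (ed (i+1)) then (1:ℝ) else 0) := by
    refine Finset.sum_congr rfl fun i _ => ?_
    rw [hcyc i]
  rw [h3]
  rw [Fintype.sum_equiv (Equiv.addRight (1 : ZMod n))
    (fun i => if v = tail (ed (i+1)) then (1:ℝ) else 0)
    (fun i => if v = tail (ed i) then (1:ℝ) else 0) (fun i => rfl)]
  ring

lemma aux_sum_cycles {V E : Type} [Fintype V] [Fintype E] [DecidableEq V] [DecidableEq E]
    (head tail : E → V) :
    ∀ m : ℕ, ∀ x : E → ℝ, (Finset.univ.filter (fun e => x e ≠ 0)).card ≤ m →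
      (∀ e, 0 ≤ x e) → x ≠ 0 →
      (∀ v, ∑ e, x e * ((if v = head e then (1:ℝ) else 0) - (if v = tail e then 1 else 0)) = 0) →
      ∃ (k : ℕ) (α : Fin k → ℝ) (c : Fin k → E → ℝ),
        (∀ θ, 0 < α θ) ∧ (∀ θ, IsDirectedCycleVector head tail (c θ)) ∧
        x = ∑ θ, α θ • c θ := by
  intro m
  induction m with
  | zero =>
    intro x hcard hx0 hxne hP
    exfalso
    obtain ⟨e, he⟩ := Function.ne_iff.mp hxne
    have : e ∈ Finset.univ.filter (fun e => x e ≠ 0) := by simpa using he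
    have := Finset.card_pos.mpr ⟨e, this⟩
    omega
  | succ m ih =>
    intro x hcard hx0 hxne hP
    set S : Set E := {e | x e ≠ 0} with hSdef
    have hSne : S.Nonempty := by
      obtain ⟨e, he⟩ := Function.ne_iff.mp hxne
      exact ⟨e, by simpa [hSdef] using he⟩
    -- every edge in the support has a follow-up edge in the support
    have hfollow : ∀ e ∈ S, ∃ e' ∈ S, tail e' = head e := by
      intro e he
      by_contra hno
      push_neg at hno
      have hv := hP (head e)
      simp only [mul_sub] at hv
      rw [Finset.sum_sub_distrib, sub_eq_zero] at hv
      have hR : ∑ e', x e' * (if head e = tail e' then (1:ℝ) else 0) = 0 := by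
        refine Finset.sum_eq_zero fun e' _ => ?_
        by_cases h1 : x e' = 0
        · simp [h1]
        · have h2 := hno e' (by simpa [hSdef] using h1)
          have h3 : ¬ head e = tail e' := fun h => h2 h.symm
          rw [if_neg h3, mul_zero]
      have hL : 0 < ∑ e', x e' * (if head e = head e' then (1:ℝ) else 0) := by
        refine Finset.sum_pos' (fun e' _ => ?_) ⟨e, Finset.mem_univ e, ?_⟩
        · by_cases h1 : head e = head e' <;> simp [h1, hx0 e']
        · have h4 : (if head e = head e then (1:ℝ) else 0) = 1 := if_pos rfl
          rw [h4, mul_one]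
          exact (hx0 e).lt_of_ne (Ne.symm (by simpa [hSdef] using he))
      rw [hv, hR] at hL
      exact lt_irrefl 0 hL
    obtain ⟨n, hn, ed, hinj, hcyc, hrange⟩ := exists_cycle_in head tail S hSne hfollow
    haveI : NeZero n := ⟨hn.ne'⟩
    obtain ⟨i0, -, hi0⟩ := Finset.exists_min_image Finset.univ (fun i => x (ed i))
      ⟨(0 : ZMod n), Finset.mem_univ _⟩
    set α : ℝ := x (ed i0) with hα
    have hαpos : 0 < α :=
      (hx0 _).lt_of_ne (Ne.symm (by simpa [hSdef] using hrange ⟨i0, rfl⟩))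
    set c : E → ℝ := Set.indicator (Set.range ed) 1 with hc
    have hcval : ∀ e, c e = if e ∈ Set.range ed then 1 else 0 := by
      intro e; by_cases he : e ∈ Set.range ed <;> simp [hc, he]
    set x' : E → ℝ := fun e => x e - α * c e with hx'
    have hx'0 : ∀ e, 0 ≤ x' e := by
      intro e
      rw [hx']
      by_cases he : e ∈ Set.range ed
      · obtain ⟨i, rfl⟩ := he
        simp only [hcval, Set.mem_range_self, if_pos, mul_one]
        exact sub_nonneg.mpr (hi0 i (Finset.mem_univ i))
      · simp [hcval, he, hx0 e]
    have hP' : ∀ v, ∑ e, x' e *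
        ((if v = head e then (1:ℝ) else 0) - (if v = tail e then 1 else 0)) = 0 := by
      intro v
      have hck := cycle_kernel head tail hn ed hinj hcyc v
      have expand : ∀ e, x' e * ((if v = head e then (1:ℝ) else 0) - (if v = tail e then 1 else 0))
          = x e * ((if v = head e then (1:ℝ) else 0) - (if v = tail e then 1 else 0))
            - α * (c e * ((if v = head e then (1:ℝ) else 0) - (if v = tail e then 1 else 0))) := by
        intro e; rw [hx']; ring
      rw [Finset.sum_congr rfl fun e _ => expand e, Finset.sum_sub_distrib,
        ← Finset.mul_sum, hP v, hc, hck]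
      ring
    have hzero : x' (ed i0) = 0 := by
      rw [hx']
      simp [hcval, Set.mem_range_self, hα]
    have hsub : Finset.univ.filter (fun e => x' e ≠ 0)
        ⊆ (Finset.univ.filter (fun e => x e ≠ 0)).erase (ed i0) := by
      intro e he
      simp only [Finset.mem_filter, Finset.mem_univ, true_and] at he
      rw [Finset.mem_erase]
      constructor
      · rintro rfl; exact he hzero
      · simp only [Finset.mem_filter, Finset.mem_univ, true_and]
        intro hxe
        apply he
        have hnr : e ∉ Set.range ed := fun hr => hrange hr hxe
        show x e - α * c e = 0
        rw [hcval, if_neg hnr, hxe]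
        ring
    have hmem : ed i0 ∈ Finset.univ.filter (fun e => x e ≠ 0) := by
      simpa using Ne.symm hαpos.ne
    have hcard' : (Finset.univ.filter (fun e => x' e ≠ 0)).card ≤ m := by
      have := Finset.card_le_card hsub
      rw [Finset.card_erase_of_mem hmem] at this
      omega
    have hdecomp : IsDirectedCycleVector head tail c := ⟨n, hn, ed, hinj, hcyc, hc⟩
    by_cases hx'ne : x' = 0
    · refine ⟨1, fun _ => α, fun _ => c, fun _ => hαpos, fun _ => hdecomp, ?_⟩
      funext e
      have := congrFun hx'ne e
      simp only [hx', Pi.zero_apply, sub_eq_zero] at this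
      simp [Fin.sum_univ_one, this]
    · obtain ⟨k, α', c', h1, h2, h3⟩ := ih x' hcard' hx'0 hx'ne hP'
      refine ⟨k + 1, Fin.cons α α', Fin.cons c c', ?_, ?_, ?_⟩
      · exact Fin.cases hαpos h1
      · exact Fin.cases hdecomp h2
      · funext e
        rw [Fin.sum_univ_succ]
        simp only [Fin.cons_zero, Fin.cons_succ, Pi.add_apply, Finset.sum_apply,
          Pi.smul_apply, smul_eq_mul]
        have := congrFun h3 e
        simp only [Finset.sum_apply, Pi.smul_apply, smul_eq_mul, hx'] at this
        rw [← this]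
        ring

/-- Lemma C.1: every nonzero nonnegative vector in the kernel of the
incidence map is a positive linear combination of directed cycle vectors. -/
theorem nonneg_kernel_vector_is_sum_of_directed_cycles
    {V E : Type} [Fintype V] [Fintype E] [DecidableEq V]
    (head tail : E → V)
    (x : E → ℝ) (hx0 : ∀ e, 0 ≤ x e) (hxne : x ≠ 0)
    (hker : ∑ e, x e • ((Pi.single (head e) 1 : V → ℝ) - Pi.single (tail e) 1)
      = 0) :
    ∃ (k : ℕ) (α : Fin k → ℝ) (c : Fin k → E → ℝ),
      (∀ θ, 0 < α θ) ∧
      (∀ θ, IsDirectedCycleVector head tail (c θ)) ∧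
      x = ∑ θ, α θ • c θ := by
  classical
  have hP : ∀ v, ∑ e, x e *
      ((if v = head e then (1:ℝ) else 0) - (if v = tail e then 1 else 0)) = 0 := by
    intro v
    have := congrFun hker v
    simpa [Finset.sum_apply, Pi.single_apply] using this
  exact aux_sum_cycles head tail _ x le_rfl hx0 hxne hP
end

section
/- Let U be a finite set, T : ℝ^Q → ℝ^U a linear map between finite-dimensional real coordinate spaces (Q a finite set), and z ∈ ℝ^U. Then exactly one of the following holds: (a) there exists q ∈ ℝ^Q with (Tq)_u ≤ z_u for all u ∈ U; (b) there exists p ∈ ℝ≥0^U with T^T p = 0 (where T^T is the adjoint/transpose of T) and p · z < 0. -/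
/-!
Feasibility of `T q ≤ z` says that `z` lies in the cone `C = ℝ≥0^U + range T`. This cone is
finitely generated (by the unit vectors and `±` a finite spanning set of `range T`), hence
closed: by the conic Carathéodory theorem it is a finite union of cones spanned by linearly
independent vectors, each the image of a closed orthant under a linear embedding. If `z ∉ C`, Hahn–Banach
separation gives a functional `f` with `f ≥ 0` on `C` and `f z < 0`, and `p u = f eᵤ` is the
certificate: `p ≥ 0` since `eᵤ ∈ C`, and `p` annihilates `range T` since `± T q ∈ C`. Conversely
`p ≥ 0` and `pᵀ T = 0` give `p · z ≥ p · T q = 0` for any feasible `q`.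
-/

open Set Topology
open scoped NNReal

namespace PointedCone

section

variable {E : Type*} [AddCommGroup E] [Module ℝ E]

lemma mem_hull_finset_iff {s : Finset E} {x : E} :
    x ∈ hull ℝ (s : Set E) ↔ ∃ c : E → ℝ, (∀ y ∈ s, 0 ≤ c y) ∧ ∑ y ∈ s, c y • y = x := by
  rw [← image_id (s : Set E), Submodule.mem_span_image_finset_iff_exists_fun']
  constructor
  · rintro ⟨c, rfl⟩
    exact ⟨fun y => c y, fun y _ => (c y).2, rfl⟩
  · rintro ⟨c, hc, rfl⟩
    refine ⟨fun y => ⟨max (c y) 0, le_max_right _ _⟩, Finset.sum_congr rfl fun y hy => ?_⟩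
    simp [Nonneg.mk_smul, max_eq_left (hc y hy)]

lemma mem_hull_range_iff {ι : Type*} [Fintype ι] {v : ι → E} {x : E} :
    x ∈ hull ℝ (range v) ↔ ∃ c : ι → ℝ, 0 ≤ c ∧ ∑ i, c i • v i = x := by
  rw [Submodule.mem_span_range_iff_exists_fun]
  constructor
  · rintro ⟨c, rfl⟩
    exact ⟨fun i => c i, fun i => (c i).2, rfl⟩
  · rintro ⟨c, hc, rfl⟩
    exact ⟨fun i => ⟨c i, hc i⟩, rfl⟩

lemma exists_mem_hull_erase_of_not_linearIndepOn [DecidableEq E] {s : Finset E}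
    {x : E} (hs : ¬LinearIndepOn ℝ id (s : Set E)) (hx : x ∈ hull ℝ (s : Set E)) :
    ∃ y₀ ∈ s, x ∈ hull ℝ (s.erase y₀ : Set E) := by
  obtain ⟨c, hc, rfl⟩ := mem_hull_finset_iff.1 hx
  obtain ⟨g, hg, hpos⟩ : ∃ g : E → ℝ, ∑ y ∈ s, g y • y = 0 ∧ ∃ y ∈ s, 0 < g y := by
    obtain ⟨g, hg, y, hy, hgy⟩ := not_linearIndepOn_finset_iff.1 hs
    rcases hgy.lt_or_gt with hneg | hpos
    · exact ⟨-g, by simpa using hg, y, hy, by simpa using hneg⟩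
    · exact ⟨g, hg, y, hy, hpos⟩
  -- Move from `c` along `-g` until the first coefficient vanishes.
  obtain ⟨y₀, hy₀, hmin⟩ := (s.filter (0 < g ·)).exists_min_image (fun y => c y / g y)
    (by simpa [Finset.filter_nonempty_iff] using hpos)
  rw [Finset.mem_filter] at hy₀
  set r := c y₀ / g y₀
  have hr : 0 ≤ r := div_nonneg (hc y₀ hy₀.1) hy₀.2.le
  have hle : ∀ y ∈ s, r * g y ≤ c y := by
    intro y hy
    rcases le_or_gt (g y) 0 with hgy | hgy
    · exact (mul_nonpos_of_nonneg_of_nonpos hr hgy).trans (hc y hy)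
    · exact (le_div_iff₀ hgy).1 (hmin y (Finset.mem_filter.2 ⟨hy, hgy⟩))
  refine ⟨y₀, hy₀.1, mem_hull_finset_iff.2 ⟨fun y => c y - r * g y,
    fun y hy => sub_nonneg.2 (hle y (Finset.mem_of_mem_erase hy)), ?_⟩⟩
  have hy₀_zero : c y₀ - r * g y₀ = 0 := by
    rw [div_mul_cancel₀ _ hy₀.2.ne', sub_self]
  rw [Finset.sum_erase _ (by simp only [hy₀_zero, zero_smul])]
  simp only [sub_smul, Finset.sum_sub_distrib, mul_smul, ← Finset.smul_sum, hg, smul_zero,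
    sub_zero]

theorem exists_linearIndepOn_of_mem_hull [DecidableEq E] {s : Finset E} {x : E}
    (hx : x ∈ hull ℝ (s : Set E)) :
    ∃ t ⊆ s, LinearIndepOn ℝ id (t : Set E) ∧ x ∈ hull ℝ (t : Set E) := by
  induction s using Finset.strongInduction with
  | H s ih =>
    by_cases hs : LinearIndepOn ℝ id (s : Set E)
    · exact ⟨s, subset_rfl, hs, hx⟩
    obtain ⟨y₀, hy₀, hx'⟩ := exists_mem_hull_erase_of_not_linearIndepOn hs hx
    obtain ⟨t, hts, ht, hxt⟩ := ih _ (Finset.erase_ssubset hy₀) hx'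
    exact ⟨t, hts.trans (Finset.erase_subset _ _), ht, hxt⟩

lemma hull_union_neg_eq_span (s : Set E) :
    hull ℝ (s ∪ -s) = ofSubmodule (Submodule.span ℝ s) := by
  refine le_antisymm (Submodule.span_le.2 (union_subset Submodule.subset_span fun x hx => ?_))
    fun x hx => ?_
  · simpa using (Submodule.span ℝ s).neg_mem (Submodule.subset_span hx)
  have hneg : ∀ y ∈ hull ℝ (s ∪ -s), -y ∈ hull ℝ (s ∪ -s) := fun y hy => by
    induction hy using Submodule.span_induction with
    | mem y hy => exact subset_hull (by simpa [or_comm] using hy)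
    | zero => simp
    | add y w _ _ hy hw => rw [neg_add]; exact add_mem hy hw
    | smul c y _ hy => simpa using Submodule.smul_mem _ c hy
  induction hx using Submodule.span_induction with
  | mem y hy => exact subset_hull (Or.inl hy)
  | zero => exact zero_mem _
  | add y w _ _ hy hw => exact add_mem hy hw
  | smul a y _ hy =>
    rcases le_or_gt 0 a with ha | ha
    · exact Submodule.smul_mem _ (⟨a, ha⟩ : ℝ≥0) hy
    · have := Submodule.smul_mem _ (⟨-a, by linarith⟩ : ℝ≥0) (hneg y hy)
      rwa [Nonneg.mk_smul, smul_neg, neg_smul, neg_neg] at this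

variable [TopologicalSpace E] [IsTopologicalAddGroup E] [ContinuousSMul ℝ E] [T2Space E]

lemma isClosed_hull_of_linearIndepOn {t : Finset E}
    (ht : LinearIndepOn ℝ id (t : Set E)) : IsClosed (hull ℝ (t : Set E) : Set E) := by
  set L := Fintype.linearCombination ℝ ((↑) : t → E)
  have hL : IsClosedEmbedding L := L.isClosedEmbedding_of_injective <|
    LinearMap.ker_eq_bot.2 (linearIndependent_iff_injective_fintypeLinearCombination.1 ht)
  have hhull : (hull ℝ (t : Set E) : Set E) = L '' Ici 0 := by
    ext x
    rw [SetLike.mem_coe, ← Subtype.range_coe (s := (t : Set E)), mem_hull_range_iff]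
    rfl
  rw [hhull]
  exact hL.isClosedMap _ isClosed_Ici

theorem isClosed_hull_of_finite {s : Set E} (hs : s.Finite) :
    IsClosed (hull ℝ s : Set E) := by
  classical
  lift s to Finset E using hs
  have hunion : (hull ℝ (s : Set E) : Set E) =
      ⋃ t ∈ {t : Finset E | t ⊆ s ∧ LinearIndepOn ℝ id (t : Set E)}, hull ℝ (t : Set E) := by
    refine subset_antisymm (fun x hx => ?_) (iUnion₂_subset fun t ht => ?_)
    · obtain ⟨t, hts, ht, hxt⟩ := exists_linearIndepOn_of_mem_hull hx
      exact mem_iUnion₂.2 ⟨t, ⟨hts, ht⟩, hxt⟩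
    · exact Submodule.span_mono (Finset.coe_subset.2 ht.1)
  rw [hunion]
  exact (s.powerset.finite_toSet.subset fun t ht => Finset.mem_powerset.2 ht.1).isClosed_biUnion
    fun t ht => isClosed_hull_of_linearIndepOn ht.2

end

lemma positive_eq_hull_single (ι : Type*) [Fintype ι] [DecidableEq ι] :
    positive ℝ (ι → ℝ) = hull ℝ (range fun i => Pi.single i 1) := by
  ext x
  rw [mem_hull_range_iff, mem_positive]
  refine ⟨fun hx => ⟨x, hx, (pi_eq_sum_univ' x).symm⟩, ?_⟩
  rintro ⟨c, hc, rfl⟩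
  exact Finset.sum_nonneg fun i _ => smul_nonneg (hc i) (Pi.single_nonneg.2 zero_le_one)

lemma mem_positive_sup_range_iff {M E : Type*} [AddCommGroup M] [Module ℝ M] [AddCommGroup E]
    [PartialOrder E] [IsOrderedAddMonoid E] [Module ℝ E] [PosSMulMono ℝ E]
    (T : M →ₗ[ℝ] E) {z : E} :
    z ∈ positive ℝ E ⊔ ofSubmodule (LinearMap.range T) ↔ ∃ q, T q ≤ z := by
  rw [Submodule.mem_sup]
  constructor
  · rintro ⟨y, hy, _, ⟨q, rfl⟩, rfl⟩
    exact ⟨q, le_add_of_nonneg_left hy⟩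
  · rintro ⟨q, hq⟩
    exact ⟨z - T q, sub_nonneg.2 hq, T q, ⟨q, rfl⟩, sub_add_cancel z (T q)⟩

lemma isClosed_positive_sup_ofSubmodule {U : Type*} [Fintype U] (S : Submodule ℝ (U → ℝ)) :
    IsClosed ((positive ℝ (U → ℝ) ⊔ ofSubmodule S : PointedCone ℝ (U → ℝ)) : Set (U → ℝ)) := by
  classical
  obtain ⟨s, hs, rfl⟩ := Submodule.fg_def.1 (IsNoetherian.noetherian S)
  rw [positive_eq_hull_single, ← hull_union_neg_eq_span, ← Submodule.span_union]
  exact isClosed_hull_of_finite ((finite_range _).union (hs.union hs.neg))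

end PointedCone

lemma LinearMap.apply_eq_sum_single_mul {ι : Type*} [Fintype ι] [DecidableEq ι]
    (f : (ι → ℝ) →ₗ[ℝ] ℝ) (x : ι → ℝ) : f x = ∑ i, f (Pi.single i 1) * x i := by
  conv_lhs => rw [pi_eq_sum_univ' x]
  simp [mul_comm]

theorem gale_alternative_general
    {Q U : Type} [Fintype U]
    (T : (Q → ℝ) →ₗ[ℝ] (U → ℝ)) (z : U → ℝ) :
    Xor'
      (∃ q : Q → ℝ, ∀ u, T q u ≤ z u)
      (∃ p : U → ℝ, (∀ u, 0 ≤ p u) ∧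
        (∀ q : Q → ℝ, ∑ u, p u * T q u = 0) ∧
        ∑ u, p u * z u < 0) := by
  classical
  refine xor_iff_iff_not.2 ⟨fun ⟨q, hq⟩ ⟨p, hp, hpT, hpz⟩ => ?_, not_imp_comm.1 fun hinfeas => ?_⟩
  · have hle : ∑ u, p u * T q u ≤ ∑ u, p u * z u :=
      Finset.sum_le_sum fun u _ => mul_le_mul_of_nonneg_left (hq u) (hp u)
    linarith [hpT q]
  let C : ProperCone ℝ (U → ℝ) :=
    ⟨_, PointedCone.isClosed_positive_sup_ofSubmodule (LinearMap.range T)⟩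
  obtain ⟨f, hfC, hfz⟩ := ProperCone.hyperplane_separation_point C
    (mt (PointedCone.mem_positive_sup_range_iff T).1 hinfeas)
  have hfT : ∀ q, 0 ≤ f (T q) := fun q =>
    hfC _ (Submodule.mem_sup_right (LinearMap.mem_range_self T q))
  have hf : ∀ x, f x = ∑ u, f (Pi.single u 1) * x u := f.toLinearMap.apply_eq_sum_single_mul
  refine ⟨fun u => f (Pi.single u 1), fun u => hfC _ (Submodule.mem_sup_left ?_),
    fun q => (hf (T q)).symm.trans ?_, hf z ▸ hfz⟩
  · exact Pi.single_nonneg.2 zero_le_one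
  · exact le_antisymm (by simpa using hfT (-q)) (hfT q)

/-- Gale's theorem of the alternative for the system Tq ≤ z. -/
theorem gale_alternative
    {Q U : Type} [Fintype Q] [Fintype U]
    (T : (Q → ℝ) →ₗ[ℝ] (U → ℝ)) (z : U → ℝ) :
    Xor'
      (∃ q : Q → ℝ, ∀ u, T q u ≤ z u)
      (∃ p : U → ℝ, (∀ u, 0 ≤ p u) ∧
        (∀ q : Q → ℝ, ∑ u, p u * T q u = 0) ∧
        ∑ u, p u * z u < 0) :=
  gale_alternative_general T z
end

section
/- Let n ≥ 2 and let e₁,…,eₙ, f₁,…,fₙ be positive reals with (f₁⋯fₙ)/(e₁⋯eₙ) ≤ 1, and suppose a₁,…,aₙ are positive reals satisfying f_n·a_n − e₁·a₁ > 0 and f_i·a_i − e_{i+1}·a_{i+1} > 0 for i = 1,…,n−1. Then ((f₁⋯fₙ)/(e₁⋯eₙ) − 1)·a_n > 0, which is a contradiction; hence no such positive reals a₁,…,aₙ exist. -/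
/-- §5.7.1, displays (5.16)–(5.17): when the cycle is not stoichiometrically
expansive, the cyclic system of source inequalities has no positive
solution. -/
theorem no_positive_solution_of_cyclic_inequalities
    (n : ℕ) (hn : 2 ≤ n) [NeZero n]
    (e f : ZMod n → ℝ)
    (he : ∀ i, 0 < e i) (hf : ∀ i, 0 < f i)
    (hratio : (∏ i, f i) / (∏ i, e i) ≤ 1) :
    ¬ ∃ a : ZMod n → ℝ, (∀ i, 0 < a i) ∧
      ∀ i : ZMod n, f i * a i - e (i + 1) * a (i + 1) > 0 := by
  rintro ⟨a, ha, hineq⟩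
  have hE : 0 < ∏ i, e i := Finset.prod_pos (fun i _ => he i)
  have hF : 0 < ∏ i, f i := Finset.prod_pos (fun i _ => hf i)
  have hA : 0 < ∏ i, a i := Finset.prod_pos (fun i _ => ha i)
  have hfe : (∏ i, f i) ≤ ∏ i, e i := by
    have := (div_le_one hE).mp hratio
    exact this
  have hlt : (∏ i : ZMod n, e (i + 1) * a (i + 1)) < ∏ i : ZMod n, f i * a i := by
    apply Finset.prod_lt_prod_of_nonempty
    · intro i _; exact mul_pos (he _) (ha _)
    · intro i _; linarith [hineq i]
    · exact Finset.univ_nonempty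
  have hre : (∏ i : ZMod n, e (i + 1) * a (i + 1)) = ∏ i : ZMod n, e i * a i :=
    Fintype.prod_equiv (Equiv.addRight (1 : ZMod n)) _ _ (fun i => rfl)
  rw [hre, Finset.prod_mul_distrib, Finset.prod_mul_distrib] at hlt
  nlinarith
end
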